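/- arXiv:1603.07686 — 6 statements merged into one kernel-verified Lean document; each statement's English description precedes it below -/
import Mathlib

section
/- Let M be a real n×n matrix with nonpositive off-diagonal entries, and suppose there exist strictly positive vectors v, w with M v ≫ 0 and Mᵀ w ≫ 0. Let X = diag(v₁/w₁, …, vₙ/wₙ). Then the symmetric matrix M X + X Mᵀ is positive definite. -/
/-!
With `W = diagonal w` and `V = diagonal v` one has `M X + X Mᵀ = W⁻¹ (A + Aᵀ) W⁻¹` for
`A = W M V`, so it suffices that `sᵀ A s > 0` for `s ≠ 0`. `A` again has
nonpositive off-diagonal entries, and its row and column sums are the positive vectors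
`w ∘ M v` and `v ∘ Mᵀ w`. For such a matrix, `2 sᵢ sⱼ Aᵢⱼ ≥ (sᵢ² + sⱼ²) Aᵢⱼ` termwise, whence
`2 sᵀ A s ≥ ∑ᵢ sᵢ² (row sumᵢ + column sumᵢ) > 0` for `s ≠ 0`.
-/

open Matrix

namespace Matrix

variable {ι : Type*} [Fintype ι]

theorem sum_sq_mul_rowSum_add_colSum_le_two_mul_dotProduct_mulVec (A : Matrix ι ι ℝ)
    (hoff : ∀ i j, i ≠ j → A i j ≤ 0) (x : ι → ℝ) :
    ∑ i, x i ^ 2 * ((A *ᵥ 1) i + (Aᵀ *ᵥ 1) i) ≤ 2 * (x ⬝ᵥ A *ᵥ x) := by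
  have hsplit : ∑ i, x i ^ 2 * ((A *ᵥ 1) i + (Aᵀ *ᵥ 1) i)
      = ∑ i, ∑ j, (x i ^ 2 + x j ^ 2) * A i j := by
    simp only [mulVec, dotProduct, transpose_apply, Pi.one_apply, mul_one, mul_add,
      Finset.mul_sum, add_mul, Finset.sum_add_distrib]
    rw [Finset.sum_comm (f := fun i j => x j ^ 2 * A i j)]
  have hquad : 2 * (x ⬝ᵥ A *ᵥ x) = ∑ i, ∑ j, 2 * x i * x j * A i j := by
    simp only [mulVec, dotProduct, Finset.mul_sum]
    exact Finset.sum_congr rfl fun i _ => Finset.sum_congr rfl fun j _ => by ring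
  rw [hsplit, hquad]
  refine Finset.sum_le_sum fun i _ => Finset.sum_le_sum fun j _ => ?_
  rcases eq_or_ne i j with rfl | hij
  · exact le_of_eq (by ring)
  · exact mul_le_mul_of_nonpos_right (by nlinarith [sq_nonneg (x i - x j)]) (hoff i j hij)

theorem dotProduct_mulVec_pos_of_offDiag_nonpos (A : Matrix ι ι ℝ)
    (hoff : ∀ i j, i ≠ j → A i j ≤ 0) (hrow : ∀ i, 0 < (A *ᵥ 1) i)
    (hcol : ∀ i, 0 < (Aᵀ *ᵥ 1) i) {x : ι → ℝ} (hx : x ≠ 0) :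
    0 < x ⬝ᵥ A *ᵥ x := by
  obtain ⟨i, hi⟩ := Function.ne_iff.mp hx
  have hsum : 0 < ∑ i, x i ^ 2 * ((A *ᵥ 1) i + (Aᵀ *ᵥ 1) i) :=
    Finset.sum_pos' (fun k _ => mul_nonneg (sq_nonneg _) (add_pos (hrow k) (hcol k)).le)
      ⟨i, Finset.mem_univ i, mul_pos (sq_pos_of_ne_zero hi) (add_pos (hrow i) (hcol i))⟩
  linarith [sum_sq_mul_rowSum_add_colSum_le_two_mul_dotProduct_mulVec A hoff x]

theorem posDef_add_transpose_of_dotProduct_mulVec_pos (B : Matrix ι ι ℝ)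
    (hB : ∀ x : ι → ℝ, x ≠ 0 → 0 < x ⬝ᵥ B *ᵥ x) : (B + Bᵀ).PosDef := by
  refine PosDef.of_dotProduct_mulVec_pos ?_ fun x hx => ?_
  · simp only [IsHermitian, conjTranspose_eq_transpose_of_trivial, transpose_add,
      transpose_transpose, add_comm]
  · have hT : x ⬝ᵥ Bᵀ *ᵥ x = x ⬝ᵥ B *ᵥ x := by
      rw [dotProduct_mulVec, vecMul_transpose, dotProduct_comm]
    rw [star_trivial, add_mulVec, dotProduct_add, hT]
    linarith [hB x hx]

end Matrix

theorem diag_scaling_posDef {n : ℕ} (M : Matrix (Fin n) (Fin n) ℝ)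
    (hoff : ∀ i j, i ≠ j → M i j ≤ 0)
    (v w : Fin n → ℝ) (hv : ∀ i, 0 < v i) (hw : ∀ i, 0 < w i)
    (hMv : ∀ i, 0 < M.mulVec v i) (hMw : ∀ i, 0 < (Mᵀ).mulVec w i) :
    (M * Matrix.diagonal (fun i => v i / w i)
      + Matrix.diagonal (fun i => v i / w i) * Mᵀ).PosDef := by
  set A := diagonal w * M * diagonal v
  have hdiag_one : ∀ u : Fin n → ℝ, diagonal u *ᵥ 1 = u := fun u => by
    ext; simp only [mulVec_diagonal, Pi.one_apply, mul_one]
  have hAoff : ∀ i j, i ≠ j → A i j ≤ 0 := fun i j hij => by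
    simp only [A, mul_diagonal, diagonal_mul]
    exact mul_nonpos_of_nonpos_of_nonneg
      (mul_nonpos_of_nonneg_of_nonpos (hw i).le (hoff i j hij)) (hv j).le
  have hArow : ∀ i, 0 < (A *ᵥ 1) i := fun i => by
    simp only [A, ← mulVec_mulVec, hdiag_one, mulVec_diagonal]
    exact mul_pos (hw i) (hMv i)
  have hAcol : ∀ i, 0 < (Aᵀ *ᵥ 1) i := fun i => by
    simp only [A, transpose_mul, diagonal_transpose, ← mulVec_mulVec, hdiag_one, mulVec_diagonal]
    exact mul_pos (hv i) (hMw i)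
  have hApos := posDef_add_transpose_of_dotProduct_mulVec_pos A
    fun x hx => dotProduct_mulVec_pos_of_offDiag_nonpos A hAoff hArow hAcol hx
  have hconj : M * diagonal (fun i => v i / w i) + diagonal (fun i => v i / w i) * Mᵀ
      = (diagonal w⁻¹)ᴴ * (A + Aᵀ) * diagonal w⁻¹ := by
    ext i j
    have := (hw i).ne'
    have := (hw j).ne'
    simp only [A, Matrix.add_apply, mul_diagonal, diagonal_mul, transpose_apply,
      conjTranspose_eq_transpose_of_trivial, diagonal_transpose, transpose_mul, Matrix.mul_add,
      Pi.inv_apply]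
    field_simp
  rw [hconj]
  refine hApos.conjTranspose_mul_mul_same (mulVec_injective_of_isUnit ?_)
  exact isUnit_diagonal.mpr (Pi.isUnit_iff.mpr fun i => (inv_pos.mpr (hw i)).ne'.isUnit)
end

section
/- If S is a real symmetric Metzler matrix (nonnegative off-diagonal entries) and there exists a strictly positive vector w with S w ≪ 0 (all entries negative), then S is negative definite. -/
/-!
Write `x = w * y` coordinatewise. For symmetric `S`,
`2 xᵀ S x = 2 ∑ᵢ (S w)ᵢ wᵢ yᵢ² - ∑ᵢⱼ Sᵢⱼ wᵢ wⱼ (yᵢ - yⱼ)²`.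
The diagonal terms of the double sum vanish and the off-diagonal ones are nonnegative since `S` is
Metzler and `w > 0`, so `xᵀ S x ≤ ∑ᵢ (S w)ᵢ wᵢ yᵢ²`, which is negative as soon as `y ≠ 0`.
-/

open Finset

namespace Matrix

variable {ι R : Type*} [Fintype ι]

def IsMetzler [Zero R] [LE R] (S : Matrix ι ι R) : Prop :=
  Pairwise fun i j => 0 ≤ S i j

namespace IsSymm

theorem two_mul_dotProduct_mulVec_mul_eq [CommRing R] {S : Matrix ι ι R} (hS : S.IsSymm)
    (w y : ι → R) :
    2 * ((w * y) ⬝ᵥ S *ᵥ (w * y)) =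
      2 * ∑ i, (S *ᵥ w) i * w i * y i ^ 2 - ∑ i, ∑ j, S i j * w i * w j * (y i - y j) ^ 2 := by
  have diag : ∑ i, (S *ᵥ w) i * w i * y i ^ 2 = ∑ i, ∑ j, S i j * w i * w j * y i ^ 2 := by
    simp only [mulVec, dotProduct, sum_mul]
    exact sum_congr rfl fun i _ => sum_congr rfl fun j _ => by ring
  have swap : ∑ i, ∑ j, S i j * w i * w j * y j ^ 2 = ∑ i, ∑ j, S i j * w i * w j * y i ^ 2 := by
    rw [sum_comm]
    refine sum_congr rfl fun i _ => sum_congr rfl fun j _ => ?_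
    rw [hS.apply i j]
    ring
  have cross : (w * y) ⬝ᵥ S *ᵥ (w * y) = ∑ i, ∑ j, (w i * y i) * (S i j * (w j * y j)) := by
    simp only [dotProduct, mulVec, Pi.mul_apply, mul_sum]
  have expand : ∑ i, ∑ j, S i j * w i * w j * (y i - y j) ^ 2 =
      ∑ i, ∑ j, S i j * w i * w j * y i ^ 2 + ∑ i, ∑ j, S i j * w i * w j * y j ^ 2 -
        2 * ∑ i, ∑ j, (w i * y i) * (S i j * (w j * y j)) := by
    simp only [mul_sum, ← sum_add_distrib, ← sum_sub_distrib]
    exact sum_congr rfl fun i _ => sum_congr rfl fun j _ => by ring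
  rw [expand, swap, diag, cross]
  ring

section Ordered

variable [CommRing R] [LinearOrder R] [IsStrictOrderedRing R] {S : Matrix ι ι R} {w : ι → R}

theorem dotProduct_mulVec_mul_neg_of_isMetzler (hS : S.IsSymm) (hM : S.IsMetzler)
    (hw : ∀ i, 0 < w i) (hSw : ∀ i, (S *ᵥ w) i < 0) {y : ι → R} (hy : y ≠ 0) :
    (w * y) ⬝ᵥ S *ᵥ (w * y) < 0 := by
  have offDiag : 0 ≤ ∑ i, ∑ j, S i j * w i * w j * (y i - y j) ^ 2 := by
    refine sum_nonneg fun i _ => sum_nonneg fun j _ => ?_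
    obtain rfl | hij := eq_or_ne i j
    · simp
    · have := hM hij
      have := hw i
      have := hw j
      positivity
  have diag : ∑ i, (S *ᵥ w) i * w i * y i ^ 2 < ∑ _i : ι, (0 : R) := by
    obtain ⟨i₀, hi₀⟩ := Function.ne_iff.mp hy
    refine sum_lt_sum (fun i _ => ?_) ⟨i₀, mem_univ _, ?_⟩
    · exact mul_nonpos_of_nonpos_of_nonneg
        (mul_nonpos_of_nonpos_of_nonneg (hSw i).le (hw i).le) (sq_nonneg _)
    · exact mul_neg_of_neg_of_pos (mul_neg_of_neg_of_pos (hSw i₀) (hw i₀)) (sq_pos_of_ne_zero hi₀)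
  rw [sum_const_zero] at diag
  linarith [hS.two_mul_dotProduct_mulVec_mul_eq w y]

end Ordered

theorem posDef_neg_of_isMetzler {S : Matrix ι ι ℝ} {w : ι → ℝ} (hS : S.IsSymm)
    (hM : S.IsMetzler) (hw : ∀ i, 0 < w i) (hSw : ∀ i, (S *ᵥ w) i < 0) : (-S).PosDef := by
  refine posDef_iff_dotProduct_mulVec.mpr ⟨(isHermitian_iff_isSymm.mpr hS).neg, fun x hx => ?_⟩
  have hwx : w * (x / w) = x := funext fun i => mul_div_cancel₀ _ (hw i).ne'
  have hxw : x / w ≠ 0 := fun h => hx (by rw [← hwx, h, mul_zero])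
  have := hS.dotProduct_mulVec_mul_neg_of_isMetzler hM hw hSw hxw
  rw [hwx] at this
  simpa [neg_mulVec] using this

end IsSymm

end Matrix

theorem symm_metzler_negVec_negDef {n : ℕ} (S : Matrix (Fin n) (Fin n) ℝ)
    (hsym : S.IsSymm) (hoff : ∀ i j, i ≠ j → 0 ≤ S i j)
    (w : Fin n → ℝ) (hw : ∀ i, 0 < w i) (hSw : ∀ i, S.mulVec w i < 0) :
    (-S).PosDef :=
  hsym.posDef_neg_of_isMetzler hoff hw hSw
end

section
/- Let A be Hurwitz. If Q is any negative definite symmetric matrix, then the Lyapunov equation A X + X Aᵀ = Q has a unique solution X, and X is symmetric positive definite. Explicitly, X = ∫₀^∞ e^{tA}(−Q)e^{tAᵀ} dt. -/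
/-!
Hurwitz stability makes `‖exp (t • A)‖` decay like `e^{-l t}`: since `exp B` is a polynomial in `B`,
its spectrum lies in `exp '' spectrum B`, so after shifting `B` by a real constant its exponential
has spectral radius `< 1`, hence bounded powers by Gelfand's formula.

Then `g t = exp (t • A) * M * exp (t • Aᵀ)` satisfies `g' = A g + g Aᵀ` and tends to `0`, so the
fundamental theorem of calculus on `(0, ∞)` shows that `X = ∫ g` solves `A X + X Aᵀ = -M`. For a
solution `Z` of the homogeneous equation the same curve is constant and tends to `0`, so `Z = 0`.
Positive definiteness holds pointwise for `g` (a congruence of `M = -Q` by an invertible matrix)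
and passes to the integral.
-/

open Matrix

section

open NormedSpace Filter Topology MeasureTheory Asymptotics Set Polynomial
-- The Frobenius norm is submultiplicative and invariant under transposition and under `ℝ ↪ ℂ`.
open scoped Matrix.Norms.Frobenius

section BanachAlgebra

theorem exists_norm_pow_le_of_forall_norm_lt_one {A : Type*} [NormedRing A] [NormedAlgebra ℂ A]
    [CompleteSpace A] {a : A} (ha : ∀ z ∈ spectrum ℂ a, ‖z‖ < 1) :
    ∃ C, ∀ k : ℕ, ‖a ^ k‖ ≤ C := by
  rcases subsingleton_or_nontrivial A with _ | _
  · exact ⟨0, fun k => by simp [Subsingleton.elim (a ^ k) 0]⟩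
  have hρ : spectralRadius ℂ a < 1 := by
    simpa using spectrum.spectralRadius_lt_of_forall_lt a (r := 1) fun z hz => by
      simpa [← NNReal.coe_lt_coe] using ha z hz
  have hev : ∀ᶠ k : ℕ in atTop, ‖a ^ k‖ ≤ 1 := by
    filter_upwards [(spectrum.pow_norm_pow_one_div_tendsto_nhds_spectralRadius a).eventually_lt_const
      hρ] with k hk
    by_contra! h
    rw [ENNReal.ofReal_lt_one] at hk
    exact hk.not_ge (Real.one_le_rpow h.le (by positivity))
  obtain ⟨C, hC⟩ := (isBoundedUnder_of_eventually_le hev).bddAbove_range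
  exact ⟨C, fun k => hC ⟨k, rfl⟩⟩

variable {𝔸 : Type*} [NormedRing 𝔸] [NormedAlgebra ℝ 𝔸] [CompleteSpace 𝔸]

theorem isBigO_exp_smul_one_of_norm_pow_le {a : 𝔸} {C : ℝ} (h : ∀ k : ℕ, ‖exp a ^ k‖ ≤ C) :
    (fun t : ℝ => exp (t • a)) =O[atTop] fun _ => (1 : ℝ) := by
  -- `exp_continuous` and `exp_add_of_commute` are stated for `ℚ`-algebras.
  let : NormedAlgebra ℚ 𝔸 := .restrictScalars ℚ ℝ 𝔸
  obtain ⟨M, hM⟩ := isCompact_Icc.exists_bound_of_continuousOn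
    (f := fun s : ℝ => exp (s • a)) (s := Icc 0 1)
    (exp_continuous.comp (continuous_id.smul continuous_const)).continuousOn
  refine IsBigO.of_bound (C * M) ?_
  filter_upwards [eventually_ge_atTop 0] with t ht
  have hsplit : exp (t • a) = exp a ^ ⌊t⌋₊ * exp ((t - ⌊t⌋₊) • a) := by
    rw [← NormedSpace.exp_nsmul,
      ← NormedSpace.exp_add_of_commute (((Commute.refl a).smul_left _).smul_right _),
      ← Nat.cast_smul_eq_nsmul ℝ, ← add_smul, add_sub_cancel]
  rw [hsplit, norm_one, mul_one]
  calc ‖exp a ^ ⌊t⌋₊ * exp ((t - ⌊t⌋₊) • a)‖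
      ≤ ‖exp a ^ ⌊t⌋₊‖ * ‖exp ((t - ⌊t⌋₊) • a)‖ := norm_mul_le _ _
    _ ≤ C * M := mul_le_mul (h _)
        (hM _ ⟨sub_nonneg.2 (Nat.floor_le ht), by linarith [Nat.lt_floor_add_one t]⟩)
        (norm_nonneg _) ((norm_nonneg _).trans (h 0))

end BanachAlgebra

theorem integrableOn_Ioi_of_isBigO_exp_neg {E : Type*} [NormedAddCommGroup E] {f : ℝ → E}
    {a b : ℝ} (hb : 0 < b) (hf : ContinuousOn f (Ici a))
    (ho : f =O[atTop] fun x => Real.exp (-b * x)) : IntegrableOn f (Ioi a) :=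
  (integrable_norm_iff ((hf.mono Ioi_subset_Ici_self).aestronglyMeasurable measurableSet_Ioi)).mp
    (integrable_of_isBigO_exp_neg hb hf.norm ho.norm_left)

section Sylvester

variable {𝔸 : Type*} [NormedRing 𝔸] [NormedAlgebra ℝ 𝔸]

theorem mul_add_mul_exp_smul_mul_exp_smul (a b m : 𝔸) (t : ℝ) :
    a * (exp (t • a) * m * exp (t • b)) + exp (t • a) * m * exp (t • b) * b =
      exp (t • a) * (a * m + m * b) * exp (t • b) := by
  have ha : Commute a (exp (t • a)) := ((Commute.refl a).smul_right t).exp_right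
  have hb : Commute b (exp (t • b)) := ((Commute.refl b).smul_right t).exp_right
  calc a * (exp (t • a) * m * exp (t • b)) + exp (t • a) * m * exp (t • b) * b
      = a * exp (t • a) * m * exp (t • b) + exp (t • a) * m * (exp (t • b) * b) := by
        noncomm_ring
    _ = exp (t • a) * (a * m + m * b) * exp (t • b) := by rw [ha.eq, ← hb.eq]; noncomm_ring

theorem isBigO_exp_smul_mul_exp_smul {a b : 𝔸} {l : ℝ}
    (ha : (fun t : ℝ => exp (t • a)) =O[atTop] fun t => Real.exp (-l * t))
    (hb : (fun t : ℝ => exp (t • b)) =O[atTop] fun t => Real.exp (-l * t)) (m : 𝔸) :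
    (fun t : ℝ => exp (t • a) * m * exp (t • b)) =O[atTop] fun t => Real.exp (-(2 * l) * t) :=
  ((ha.mul (isBigO_const_const m one_ne_zero atTop)).mul hb).congr_right fun t => by
    rw [mul_one, ← Real.exp_add]; ring_nf

theorem tendsto_exp_smul_mul_exp_smul {a b : 𝔸} {l : ℝ} (hl : 0 < l)
    (ha : (fun t : ℝ => exp (t • a)) =O[atTop] fun t => Real.exp (-l * t))
    (hb : (fun t : ℝ => exp (t • b)) =O[atTop] fun t => Real.exp (-l * t)) (m : 𝔸) :
    Tendsto (fun t : ℝ => exp (t • a) * m * exp (t • b)) atTop (𝓝 0) :=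
  (isBigO_exp_smul_mul_exp_smul ha hb m).trans_tendsto <|
    Real.tendsto_exp_comp_nhds_zero.2 <| tendsto_id.const_mul_atTop_of_neg (by linarith)

variable [CompleteSpace 𝔸]

theorem hasDerivAt_exp_smul_mul_exp_smul (a b m : 𝔸) (t : ℝ) :
    HasDerivAt (fun s : ℝ => exp (s • a) * m * exp (s • b))
      (exp (t • a) * (a * m + m * b) * exp (t • b)) t :=
  (((hasDerivAt_exp_smul_const (𝕂 := ℝ) a t).mul_const m).mul
    (hasDerivAt_exp_smul_const' (𝕂 := ℝ) b t)).congr_deriv (by noncomm_ring)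

theorem continuous_exp_smul_mul_exp_smul (a b m : 𝔸) :
    Continuous fun t : ℝ => exp (t • a) * m * exp (t • b) :=
  continuous_iff_continuousAt.2 fun t => (hasDerivAt_exp_smul_mul_exp_smul a b m t).continuousAt

theorem eq_zero_of_mul_add_mul_eq_zero {a b z : 𝔸} (hz : a * z + z * b = 0)
    (hlim : Tendsto (fun t : ℝ => exp (t • a) * z * exp (t • b)) atTop (𝓝 0)) : z = 0 := by
  have hconst (t : ℝ) : exp (t • a) * z * exp (t • b) = z := by
    simpa using is_const_of_deriv_eq_zero
      (fun s => (hasDerivAt_exp_smul_mul_exp_smul a b z s).differentiableAt)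
      (fun s => by simp [(hasDerivAt_exp_smul_mul_exp_smul a b z s).deriv, hz]) t 0
  simp only [hconst] at hlim
  exact tendsto_nhds_unique tendsto_const_nhds hlim

theorem mul_integral_add_integral_mul {a b m : 𝔸}
    (hint : IntegrableOn (fun t : ℝ => exp (t • a) * m * exp (t • b)) (Ioi (0 : ℝ)))
    (hlim : Tendsto (fun t : ℝ => exp (t • a) * m * exp (t • b)) atTop (𝓝 0)) :
    a * (∫ t in Ioi (0 : ℝ), exp (t • a) * m * exp (t • b)) +
      (∫ t in Ioi (0 : ℝ), exp (t • a) * m * exp (t • b)) * b = -m := by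
  have hderiv (t : ℝ) : HasDerivAt (fun s : ℝ => exp (s • a) * m * exp (s • b))
      (a * (exp (t • a) * m * exp (t • b)) + exp (t • a) * m * exp (t • b) * b) t := by
    rw [mul_add_mul_exp_smul_mul_exp_smul]
    exact hasDerivAt_exp_smul_mul_exp_smul a b m t
  rw [← integral_const_mul_of_integrable hint, ← integral_mul_const_of_integrable hint,
    ← integral_add (hint.const_mul a) (hint.mul_const b),
    integral_Ioi_of_hasDerivAt_of_tendsto
      (continuous_exp_smul_mul_exp_smul a b m).continuousWithinAt (fun t _ => hderiv t)
      ((hint.const_mul a).add (hint.mul_const b)) hlim]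
  simp

theorem integrableOn_exp_smul_mul_exp_smul {a b : 𝔸} {l : ℝ} (hl : 0 < l)
    (ha : (fun t : ℝ => exp (t • a)) =O[atTop] fun t => Real.exp (-l * t))
    (hb : (fun t : ℝ => exp (t • b)) =O[atTop] fun t => Real.exp (-l * t)) (m : 𝔸) :
    IntegrableOn (fun t : ℝ => exp (t • a) * m * exp (t • b)) (Ioi (0 : ℝ)) :=
  integrableOn_Ioi_of_isBigO_exp_neg (by positivity)
    (continuous_exp_smul_mul_exp_smul a b m).continuousOn (isBigO_exp_smul_mul_exp_smul ha hb m)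

end Sylvester

namespace Matrix

variable {ι : Type*} [Fintype ι] [DecidableEq ι]

theorem aeval_mulVec_of_mulVec_eq_smul {R : Type*} [CommRing R] {B : Matrix ι ι R} {ν : R}
    {v : ι → R} (hv : B *ᵥ v = ν • v) (p : R[X]) : aeval B p *ᵥ v = p.eval ν • v := by
  have h := Module.End.aeval_apply_of_mem_apply_eq_smul (f := toLinAlgEquiv' B) (p := p)
    (by simpa [toLinAlgEquiv'_apply] using hv)
  simpa [aeval_algEquiv, toLinAlgEquiv'_apply] using h

theorem exp_mulVec_of_mulVec_eq_smul {B : Matrix ι ι ℂ} {ν : ℂ} {v : ι → ℂ}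
    (hv : B *ᵥ v = ν • v) : exp B *ᵥ v = Complex.exp ν • v := by
  have hB := (exp_series_hasSum_exp' (𝕂 := ℂ) B).map (mulVec.addMonoidHomLeft v)
    (continuous_id.matrix_mulVec continuous_const)
  have hν := (exp_series_hasSum_exp' (𝕂 := ℂ) ν).smul_const v
  refine hB.unique ?_
  convert hν using 1
  · funext k
    have hk := aeval_mulVec_of_mulVec_eq_smul hv (X ^ k)
    rw [aeval_X_pow, eval_pow, eval_X] at hk
    simp [mulVec.addMonoidHomLeft, smul_mulVec, hk, smul_smul]
  · rw [Complex.exp_eq_exp_ℂ]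

theorem exp_mem_adjoin_singleton (B : Matrix ι ι ℂ) : exp B ∈ Algebra.adjoin ℂ {B} :=
  exp_mem (R := ℂ) (s := Algebra.adjoin ℂ {B})
    (Submodule.closed_of_finiteDimensional (Algebra.adjoin ℂ {B}).toSubmodule)
    (Algebra.self_mem_adjoin_singleton ℂ B)

theorem spectrum_exp_subset (B : Matrix ι ι ℂ) :
    spectrum ℂ (exp B) ⊆ Complex.exp '' spectrum ℂ B := by
  intro μ hμ
  have hB := exp_mem_adjoin_singleton B
  rw [Algebra.adjoin_singleton_eq_range_aeval] at hB
  obtain ⟨p, hp : aeval B p = exp B⟩ := hB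
  rcases subsingleton_or_nontrivial (Matrix ι ι ℂ) with _ | _
  · simp [spectrum.of_subsingleton] at hμ
  rw [← hp, spectrum.map_polynomial_aeval_of_nonempty B p (spectrum.nonempty B)] at hμ
  obtain ⟨ν, hν, rfl⟩ := hμ
  refine ⟨ν, hν, ?_⟩
  rw [← spectrum_toLin', ← Module.End.hasEigenvalue_iff_mem_spectrum] at hν
  obtain ⟨v, hv⟩ := hν.exists_hasEigenvector
  have hBv : B *ᵥ v = ν • v := by simpa using Module.End.mem_eigenspace_iff.mp hv.1
  refine smul_left_injective ℂ hv.2 ?_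
  dsimp only
  rw [← exp_mulVec_of_mulVec_eq_smul hBv, ← aeval_mulVec_of_mulVec_eq_smul hBv, hp]

theorem isBigO_exp_smul_of_forall_re_lt (B : Matrix ι ι ℂ) {c : ℝ}
    (hB : ∀ μ ∈ spectrum ℂ B, μ.re < c) :
    (fun t : ℝ => exp (t • B)) =O[atTop] fun t => Real.exp (c * t) := by
  set B' := B - algebraMap ℝ (Matrix ι ι ℂ) c with hB'def
  have hB' : ∀ z ∈ spectrum ℂ (exp B'), ‖z‖ < 1 := by
    intro z hz
    obtain ⟨ν, hν, rfl⟩ := spectrum_exp_subset B' hz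
    rw [hB'def, IsScalarTower.algebraMap_apply ℝ ℂ, ← spectrum.sub_singleton_eq] at hν
    obtain ⟨μ, hμ, _, rfl, rfl⟩ := hν
    rw [Complex.norm_exp, Real.exp_lt_one_iff]
    simpa using hB μ hμ
  obtain ⟨C, hC⟩ := exists_norm_pow_le_of_forall_norm_lt_one hB'
  have hexp (t : ℝ) : exp (t • B) = Real.exp (c * t) • exp (t • B') := by
    have hsplit : t • B = algebraMap ℝ _ (c * t) + t • B' := by
      rw [smul_sub, Algebra.smul_def t (algebraMap ℝ _ c), ← map_mul, mul_comm,
        add_sub_cancel]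
    rw [hsplit, Matrix.exp_add_of_commute _ _ (Algebra.commute_algebraMap_left _ _),
      Real.exp_eq_exp_ℝ, Algebra.smul_def (exp (c * t))]
    congr 1
    exact (NormedSpace.algebraMap_exp_comm (𝔸 := Matrix ι ι ℂ) (c * t)).symm
  simp_rw [hexp]
  exact ((isBigO_refl (fun t => Real.exp (c * t)) atTop).smul
    (isBigO_exp_smul_one_of_norm_pow_le hC)).congr_right fun t => by simp

theorem exists_pos_isBigO_exp_smul_of_forall_re_neg (A : Matrix ι ι ℝ)
    (hA : ∀ μ ∈ spectrum ℂ (A.map (algebraMap ℝ ℂ)), μ.re < 0) :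
    ∃ l > 0, (fun t : ℝ => exp (t • A)) =O[atTop] fun t => Real.exp (-l * t) := by
  obtain ⟨l, hl, hlt⟩ : ∃ l > 0, ∀ μ ∈ spectrum ℂ (A.map (algebraMap ℝ ℂ)), μ.re < -l := by
    rcases (spectrum ℂ (A.map (algebraMap ℝ ℂ))).eq_empty_or_nonempty with h | h
    · exact ⟨1, one_pos, by rw [h]; simp⟩
    obtain ⟨ν, hν, hmax⟩ :=
      (spectrum.isCompact _).exists_isMaxOn h Complex.continuous_re.continuousOn
    exact ⟨-ν.re / 2, by linarith [hA ν hν],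
      fun μ hμ => by linarith [hA ν hν, isMaxOn_iff.mp hmax μ hμ]⟩
  have hnorm (t : ℝ) : ‖exp (t • A)‖ = ‖exp (t • A.map (algebraMap ℝ ℂ))‖ := by
    have hsmul : (t • A).map (algebraMap ℝ ℂ) = t • A.map (algebraMap ℝ ℂ) := by
      ext; simp
    have hmap : (exp (t • A)).map (algebraMap ℝ ℂ) = exp (t • A.map (algebraMap ℝ ℂ)) := by
      rw [← hsmul]
      exact map_exp (algebraMap ℝ ℂ).mapMatrix
        (continuous_id.matrix_map Complex.continuous_ofReal) (t • A)
    rw [← hmap]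
    exact (frobenius_norm_map_eq _ _ Complex.norm_real).symm
  refine ⟨l, hl, IsBigO.of_norm_left ?_⟩
  simp_rw [hnorm]
  exact (isBigO_exp_smul_of_forall_re_lt _ hlt).norm_left

theorem isBigO_exp_smul_transpose {A : Matrix ι ι ℝ} {l : Filter ℝ} {g : ℝ → ℝ}
    (h : (fun t : ℝ => exp (t • A)) =O[l] g) : (fun t : ℝ => exp (t • Aᵀ)) =O[l] g :=
  IsBigO.of_norm_left <| by
    simpa only [← transpose_smul, exp_transpose, frobenius_norm_transpose] using h.norm_left

theorem PosDef.exp_smul_mul_exp_smul_transpose {M : Matrix ι ι ℝ} (hM : M.PosDef)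
    (A : Matrix ι ι ℝ) (t : ℝ) : (exp (t • A) * M * exp (t • Aᵀ)).PosDef := by
  have := hM.mul_mul_conjTranspose_same (vecMul_injective_iff_isUnit.2 (isUnit_exp (t • A)))
  rwa [conjTranspose_eq_transpose_of_trivial, ← exp_transpose, transpose_smul] at this

theorem PosDef.setIntegral_exp_smul_mul_exp_smul_transpose {A M : Matrix ι ι ℝ}
    (hM : M.PosDef) {l : ℝ} (hl : 0 < l)
    (hA : (fun t : ℝ => exp (t • A)) =O[atTop] fun t => Real.exp (-l * t)) :
    (∫ t in Ioi (0 : ℝ), exp (t • A) * M * exp (t • Aᵀ)).PosDef := by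
  have hint := integrableOn_exp_smul_mul_exp_smul hl hA (isBigO_exp_smul_transpose hA) M
  have hpt (t : ℝ) := hM.exp_smul_mul_exp_smul_transpose A t
  refine PosDef.of_dotProduct_mulVec_pos ?_ fun v hv => ?_
  -- Commuting a linear map past the integral is done by term, since the two normed structures on
  -- matrices involved (via `NormedRing` and via `NormedAddCommGroup`) agree only up to unfolding.
  · have hT : (∫ t in Ioi (0 : ℝ), exp (t • A) * M * exp (t • Aᵀ))ᵀ =
        ∫ t in Ioi (0 : ℝ), (exp (t • A) * M * exp (t • Aᵀ))ᵀ :=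
      ((transposeLinearEquiv ι ι ℝ ℝ).toContinuousLinearEquiv.integral_comp_comm _).symm
    rw [IsHermitian, conjTranspose_eq_transpose_of_trivial, hT]
    congr 1 with t : 1
    simpa [IsHermitian] using (hpt t).isHermitian
  · let L : Matrix ι ι ℝ →ₗ[ℝ] ℝ :=
      LinearMap.applyₗ v ∘ₗ LinearMap.applyₗ v ∘ₗ (toLinearMap₂' ℝ).toLinearMap
    have hL (N : Matrix ι ι ℝ) : L N = v ⬝ᵥ N *ᵥ v := toLinearMap₂'_apply' N v v
    have hpos (t : ℝ) : 0 < L (exp (t • A) * M * exp (t • Aᵀ)) := by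
      simpa [hL] using (hpt t).dotProduct_mulVec_pos hv
    have hcomm : L (∫ t in Ioi (0 : ℝ), exp (t • A) * M * exp (t • Aᵀ)) =
        ∫ t in Ioi (0 : ℝ), L (exp (t • A) * M * exp (t • Aᵀ)) :=
      (L.toContinuousLinearMap.integral_comp_comm hint).symm
    rw [star_trivial, ← hL, hcomm]
    refine (setIntegral_pos_iff_support_of_nonneg_ae
      (ae_of_all _ fun t => (hpos t).le) (L.toContinuousLinearMap.integrable_comp hint)).2 ?_
    have hsupp : Function.support (fun t : ℝ => L (exp (t • A) * M * exp (t • Aᵀ))) = univ :=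
      eq_univ_of_forall fun t => (hpos t).ne'
    rw [hsupp, univ_inter]
    simp

end Matrix

end

theorem lyapunov_equation_unique_posDef_solution {n : ℕ}
    (A Q : Matrix (Fin n) (Fin n) ℝ)
    (hA : ∀ μ ∈ spectrum ℂ (A.map (algebraMap ℝ ℂ)), μ.re < 0)
    (hQ : (-Q).PosDef) :
    (∃! X : Matrix (Fin n) (Fin n) ℝ, A * X + X * Aᵀ = Q) ∧
    ∀ X : Matrix (Fin n) (Fin n) ℝ, A * X + X * Aᵀ = Q →
      X.IsSymm ∧ X.PosDef ∧
      ∀ i j, X i j = ∫ t in Set.Ioi (0 : ℝ),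
        (NormedSpace.exp (t • A) * (-Q) * NormedSpace.exp (t • Aᵀ)) i j := by
  open scoped Matrix.Norms.Frobenius in
  obtain ⟨l, hl, hexpA⟩ := exists_pos_isBigO_exp_smul_of_forall_re_neg A hA
  have hexpAT := isBigO_exp_smul_transpose hexpA
  have hint := integrableOn_exp_smul_mul_exp_smul hl hexpA hexpAT (-Q)
  have hsol := mul_integral_add_integral_mul hint
    (tendsto_exp_smul_mul_exp_smul hl hexpA hexpAT _)
  rw [neg_neg] at hsol
  have huniq (X : Matrix (Fin n) (Fin n) ℝ) (hX : A * X + X * Aᵀ = Q) :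
      X = ∫ t in Set.Ioi (0 : ℝ), NormedSpace.exp (t • A) * (-Q) * NormedSpace.exp (t • Aᵀ) := by
    refine sub_eq_zero.1 (eq_zero_of_mul_add_mul_eq_zero ?_
      (tendsto_exp_smul_mul_exp_smul hl hexpA hexpAT _))
    rw [mul_sub, sub_mul, sub_add_sub_comm, hX]
    exact sub_eq_zero.2 hsol.symm
  refine ⟨⟨_, hsol, huniq⟩, fun X hX => ?_⟩
  obtain rfl := huniq X hX
  have hpos := hQ.setIntegral_exp_smul_mul_exp_smul_transpose hl hexpA
  exact ⟨by simpa [IsHermitian, IsSymm] using hpos.isHermitian, hpos, fun i j =>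
    ((entryLinearMap ℝ ℝ i j).toContinuousLinearMap.integral_comp_comm hint).symm⟩
end

section
/- Let A be a real N×N matrix partitioned into n² blocks A_{ij} ∈ ℝ^{k_i×k_j}. Every eigenvalue λ of A satisfies, for at least one index i, the block Gershgorin inequality: the smallest singular value of (λI − A_{ii}) is at most Σ_{j≠i} ‖A_{ij}‖₂, where ‖·‖₂ is the spectral norm. -/
open Matrix

/-- The spectral (ℓ²→ℓ²  operator) norm of a complex matrix. -/
noncomputable def specNorm {m n : Type*} [Fintype m] [Fintype n] [DecidableEq n]
    (B : Matrix m n ℂ) : ℝ :=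
  ‖LinearMap.toContinuousLinearMap (Matrix.toEuclideanLin B)‖

/-- The smallest singular value of a square complex matrix. -/
noncomputable def minSingularValue {m : Type*} [Fintype m] [DecidableEq m]
    (B : Matrix m m ℂ) : ℝ :=
  ⨅ x : {x : EuclideanSpace ℂ m // ‖x‖ = 1}, ‖Matrix.toEuclideanLin B x.1‖

/-!
Take an eigenvector `v` of `A` and split it into blocks `vⱼ`; choose `i` with `‖vᵢ‖` maximal,
so `vᵢ ≠ 0`. Row block `i` of `A v = λ v` reads `(λ I - Aᵢᵢ) vᵢ = ∑_{j ≠ i} Aᵢⱼ vⱼ`, hence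
`σ_min(λ I - Aᵢᵢ) ‖vᵢ‖ ≤ ∑_{j ≠ i} ‖Aᵢⱼ‖₂ ‖vⱼ‖ ≤ (∑_{j ≠ i} ‖Aᵢⱼ‖₂) ‖vᵢ‖`.
-/

open Finset WithLp

theorem norm_toEuclideanLin_le_specNorm_mul {m n : Type*} [Fintype m] [Fintype n]
    [DecidableEq n] (B : Matrix m n ℂ) (x : EuclideanSpace ℂ n) :
    ‖toEuclideanLin B x‖ ≤ specNorm B * ‖x‖ :=
  (LinearMap.toContinuousLinearMap (toEuclideanLin B)).le_opNorm x

theorem minSingularValue_mul_norm_le {m : Type*} [Fintype m] [DecidableEq m]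
    (B : Matrix m m ℂ) (x : EuclideanSpace ℂ m) :
    minSingularValue B * ‖x‖ ≤ ‖toEuclideanLin B x‖ := by
  rcases eq_or_ne x 0 with rfl | hx
  · simp
  have hx₀ : 0 < ‖x‖ := norm_pos_iff.2 hx
  have hu : ‖(‖x‖⁻¹ : ℂ) • x‖ = 1 := by
    simp [norm_smul, hx₀.ne']
  have hmin : minSingularValue B ≤ ‖toEuclideanLin B ((‖x‖⁻¹ : ℂ) • x)‖ :=
    ciInf_le ⟨0, by rintro _ ⟨y, rfl⟩; positivity⟩ (⟨_, hu⟩ : {x : EuclideanSpace ℂ m // ‖x‖ = 1})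
  rw [map_smul, norm_smul] at hmin
  simp only [norm_inv, Complex.norm_real, norm_norm] at hmin
  rwa [← le_div_iff₀ hx₀, div_eq_inv_mul]

theorem minSingularValue_le_sum_specNorm_of_eq_sum {ι : Type*} {κ : ι → Type*}
    [∀ i, Fintype (κ i)] [∀ i, DecidableEq (κ i)] {i : ι} {s : Finset ι}
    (D : Matrix (κ i) (κ i) ℂ) (B : ∀ j, Matrix (κ i) (κ j) ℂ) (w : ∀ j, EuclideanSpace ℂ (κ j))
    (hw : toEuclideanLin D (w i) = ∑ j ∈ s, toEuclideanLin (B j) (w j))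
    (hmax : ∀ j ∈ s, ‖w j‖ ≤ ‖w i‖) (hi : w i ≠ 0) :
    minSingularValue D ≤ ∑ j ∈ s, specNorm (B j) := by
  have hbound : minSingularValue D * ‖w i‖ ≤ (∑ j ∈ s, specNorm (B j)) * ‖w i‖ :=
    calc minSingularValue D * ‖w i‖ ≤ ‖toEuclideanLin D (w i)‖ := minSingularValue_mul_norm_le D _
      _ ≤ ∑ j ∈ s, ‖toEuclideanLin (B j) (w j)‖ := hw ▸ norm_sum_le _ _
      _ ≤ ∑ j ∈ s, specNorm (B j) * ‖w j‖ :=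
          sum_le_sum fun j _ => norm_toEuclideanLin_le_specNorm_mul _ _
      _ ≤ ∑ j ∈ s, specNorm (B j) * ‖w i‖ :=
          sum_le_sum fun j hj => mul_le_mul_of_nonneg_left (hmax j hj) (norm_nonneg _)
      _ = (∑ j ∈ s, specNorm (B j)) * ‖w i‖ := (sum_mul _ _ _).symm
  exact le_of_mul_le_mul_right hbound (norm_pos_iff.2 hi)

namespace Matrix

variable {R ι : Type*} [CommRing R] [Fintype ι] {κ : ι → Type*} [∀ i, Fintype (κ i)]

theorem mulVec_comp_sigmaMk (M : Matrix (Σ i, κ i) (Σ i, κ i) R) (v : (Σ i, κ i) → R)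
    (i : ι) :
    (M *ᵥ v) ∘ Sigma.mk i = ∑ j, M.submatrix (Sigma.mk i) (Sigma.mk j) *ᵥ (v ∘ Sigma.mk j) := by
  ext x
  simp [mulVec, dotProduct, Fintype.sum_sigma]

theorem smul_one_sub_diagBlock_mulVec_eq_sum_erase [DecidableEq ι] [∀ i, DecidableEq (κ i)]
    {M : Matrix (Σ i, κ i) (Σ i, κ i) R} {v : (Σ i, κ i) → R} {μ : R} (hv : M *ᵥ v = μ • v)
    (i : ι) :
    (μ • 1 - M.submatrix (Sigma.mk i) (Sigma.mk i)) *ᵥ (v ∘ Sigma.mk i) =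
      ∑ j ∈ univ.erase i, M.submatrix (Sigma.mk i) (Sigma.mk j) *ᵥ (v ∘ Sigma.mk j) := by
  have hrow : μ • (v ∘ Sigma.mk i) = (M *ᵥ v) ∘ Sigma.mk i := by rw [hv]; rfl
  rw [sub_mulVec, smul_mulVec, one_mulVec, hrow, mulVec_comp_sigmaMk,
    sum_erase_eq_sub (mem_univ i)]

theorem exists_eigenvector_of_mem_spectrum {n : Type*} [Fintype n] [DecidableEq n]
    {K : Type*} [Field K] {M : Matrix n n K} {μ : K} (hμ : μ ∈ spectrum K M) :
    ∃ v ≠ 0, M *ᵥ v = μ • v := by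
  rw [← spectrum_toLin', ← Module.End.hasEigenvalue_iff_mem_spectrum] at hμ
  obtain ⟨v, hv⟩ := hμ.exists_hasEigenvector
  exact ⟨v, hv.2, hv.apply_eq_smul⟩

end Matrix

theorem Matrix.exists_minSingularValue_le_sum_specNorm {ι : Type*} [Fintype ι] [DecidableEq ι]
    {κ : ι → Type*} [∀ i, Fintype (κ i)] [∀ i, DecidableEq (κ i)]
    (M : Matrix (Σ i, κ i) (Σ i, κ i) ℂ) {μ : ℂ} (hμ : μ ∈ spectrum ℂ M) :
    ∃ i, minSingularValue (μ • 1 - M.submatrix (Sigma.mk i) (Sigma.mk i)) ≤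
      ∑ j ∈ univ.erase i, specNorm (M.submatrix (Sigma.mk i) (Sigma.mk j)) := by
  obtain ⟨v, hv₀, hv⟩ := exists_eigenvector_of_mem_spectrum hμ
  let w j : EuclideanSpace ℂ (κ j) := toLp 2 (v ∘ Sigma.mk j)
  obtain ⟨s, hs⟩ := Function.ne_iff.mp hv₀
  have : Nonempty ι := ⟨s.1⟩
  obtain ⟨i, hi⟩ := Finite.exists_max fun j => ‖w j‖
  have hws : w s.1 ≠ 0 := fun h => hs (congrArg (· s.2) h)
  refine ⟨i, minSingularValue_le_sum_specNorm_of_eq_sum _ _ w ?_ (fun j _ => hi j)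
    (norm_pos_iff.1 ((norm_pos_iff.2 hws).trans_le (hi s.1)))⟩
  simp only [w, toLpLin_toLp, toLin'_apply, ← WithLp.toLp_sum,
    smul_one_sub_diagBlock_mulVec_eq_sum_erase hv]

theorem block_gershgorin {nb : ℕ} (k : Fin nb → ℕ)
    (A : Matrix ((i : Fin nb) × Fin (k i)) ((i : Fin nb) × Fin (k i)) ℝ)
    (lam : ℂ) (hlam : lam ∈ spectrum ℂ (A.map (algebraMap ℝ ℂ))) :
    ∃ i : Fin nb,
      minSingularValue
        (lam • (1 : Matrix (Fin (k i)) (Fin (k i)) ℂ)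
          - Matrix.of (fun x y => algebraMap ℝ ℂ (A ⟨i, x⟩ ⟨i, y⟩)))
      ≤ ∑ j ∈ Finset.univ.erase i,
          specNorm (Matrix.of (fun (x : Fin (k i)) (y : Fin (k j)) =>
            algebraMap ℝ ℂ (A ⟨i, x⟩ ⟨j, y⟩))) :=
  (A.map (algebraMap ℝ ℂ)).exists_minSingularValue_le_sum_specNorm hlam
end

section
/- Suppose A₁₁ is Hurwitz and X₁ ≻ 0 solves the Riccati equation A₁₁X₁ + X₁A₁₁ᵀ + γ²X₁X₁ + A₁₂A₁₂ᵀ = 0, and X₂ ≻ 0 satisfies the strict Riccati inequality A₂₂X₂ + X₂A₂₂ᵀ + X₂X₂ + γ^{−2}A₂₁A₂₁ᵀ ≺ 0 for some γ > 0. Then the block matrix [[A₁₁X₁ + X₁A₁₁ᵀ, A₁₂X₂ + X₁A₂₁ᵀ],[A₂₁X₁ + X₂A₁₂ᵀ, A₂₂X₂ + X₂A₂₂ᵀ]] is negative definite. -/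
/-!
Completing the square with `U = [[γ X₁, A₁₂], [-γ⁻¹ A₂₁, -X₂]]` gives
`-(A X + X Aᵀ) = U Uᵀ + diag(0, R)`, where the first Riccati equation cancels the `(1,1)` block and
`R ≻ 0` is the second Riccati inequality. The Gram matrix `U Uᵀ` is positive semidefinite with
positive definite `(1,1)` block `γ² X₁² + A₁₂ A₁₂ᵀ`, so the quadratic form of the sum is positive:
through `R` when the second component of the vector is nonzero, through that block otherwise.
-/

open Matrix

/-- A real square matrix is Hurwitz if all of its (complex) eigenvalues have
negative real part. -/
def IsHurwitz {m : Type*} [Fintype m] [DecidableEq m] (A : Matrix m m ℝ) : Prop :=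
  ∀ μ ∈ spectrum ℂ (A.map (algebraMap ℝ ℂ)), μ.re < 0

namespace Matrix

section Blocks

variable {m n α : Type*} [Fintype m] [Fintype n]

theorem star_sumElim_dotProduct_fromBlocks_mulVec_sumElim [CommSemiring α] [StarRing α]
    (A : Matrix m m α) (B : Matrix m n α) (C : Matrix n m α) (D : Matrix n n α)
    (x₁ : m → α) (x₂ : n → α) :
    star (Sum.elim x₁ x₂) ⬝ᵥ (fromBlocks A B C D *ᵥ Sum.elim x₁ x₂) =
      star x₁ ⬝ᵥ (A *ᵥ x₁) + star x₁ ⬝ᵥ (B *ᵥ x₂) + star x₂ ⬝ᵥ (C *ᵥ x₁) +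
        star x₂ ⬝ᵥ (D *ᵥ x₂) := by
  simp only [fromBlocks_mulVec, Sum.elim_comp_inl, Sum.elim_comp_inr, Function.star_sumElim,
    sumElim_dotProduct_sumElim, dotProduct_add]
  ring

theorem toBlocks₁₁_fromBlocks_mul_conjTranspose [Semiring α] [StarRing α]
    (A : Matrix m m α) (B : Matrix m n α) (C : Matrix n m α) (D : Matrix n n α) :
    (fromBlocks A B C D * (fromBlocks A B C D)ᴴ).toBlocks₁₁ = A * Aᴴ + B * Bᴴ := by
  simp [fromBlocks_conjTranspose, fromBlocks_multiply]

variable {R : Type*} [CommRing R] [PartialOrder R] [StarRing R] [IsOrderedRing R]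

theorem PosSemidef.add_fromBlocks_zero_zero_zero_posDef {S : Matrix (m ⊕ n) (m ⊕ n) R}
    {D : Matrix n n R} (hS : S.PosSemidef) (hS₁₁ : S.toBlocks₁₁.PosDef) (hD : D.PosDef) :
    (S + fromBlocks 0 0 0 D).PosDef := by
  refine .of_dotProduct_mulVec_pos (hS.isHermitian.add ?_) fun x hx₀ => ?_
  · simp [IsHermitian, fromBlocks_conjTranspose, hD.isHermitian.eq]
  set x₁ := x ∘ Sum.inl
  set x₂ := x ∘ Sum.inr
  have hx : x = Sum.elim x₁ x₂ := (Sum.elim_comp_inl_inr x).symm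
  have hD_form : star x ⬝ᵥ (fromBlocks 0 0 0 D *ᵥ x) = star x₂ ⬝ᵥ (D *ᵥ x₂) := by
    simp [hx, star_sumElim_dotProduct_fromBlocks_mulVec_sumElim]
  rw [add_mulVec, dotProduct_add, hD_form]
  by_cases hx₂ : x₂ = 0
  · have hx₁ : x₁ ≠ 0 := fun hx₁ => hx₀ (by simp [hx, hx₁, hx₂])
    have hS_form : star x ⬝ᵥ (S *ᵥ x) = star x₁ ⬝ᵥ (S.toBlocks₁₁ *ᵥ x₁) := by
      rw [hx, ← fromBlocks_toBlocks S, star_sumElim_dotProduct_fromBlocks_mulVec_sumElim]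
      simp [hx₂]
    simpa [hS_form, hx₂] using hS₁₁.dotProduct_mulVec_pos hx₁
  · exact add_pos_of_nonneg_of_pos (hS.dotProduct_mulVec_nonneg x) (hD.dotProduct_mulVec_pos hx₂)

end Blocks

section CompletingSquare

variable {m n K : Type*} [Fintype m] [Fintype n] [Field K]

theorem fromBlocks_lyapunov_eq_sub_mul_transpose {γ : K} (hγ : γ ≠ 0)
    (A₁₁ : Matrix m m K) (A₁₂ : Matrix m n K) (A₂₁ : Matrix n m K) (A₂₂ : Matrix n n K)
    {X₁ : Matrix m m K} {X₂ : Matrix n n K} (hX₁ : X₁.IsSymm) (hX₂ : X₂.IsSymm) :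
    fromBlocks (A₁₁ * X₁ + X₁ * A₁₁ᵀ) (A₁₂ * X₂ + X₁ * A₂₁ᵀ)
        (A₂₁ * X₁ + X₂ * A₁₂ᵀ) (A₂₂ * X₂ + X₂ * A₂₂ᵀ) =
      fromBlocks (A₁₁ * X₁ + X₁ * A₁₁ᵀ + (γ ^ 2) • (X₁ * X₁) + A₁₂ * A₁₂ᵀ) 0 0
          (A₂₂ * X₂ + X₂ * A₂₂ᵀ + X₂ * X₂ + (γ ^ 2)⁻¹ • (A₂₁ * A₂₁ᵀ)) -
        fromBlocks (γ • X₁) A₁₂ (-(γ⁻¹ • A₂₁)) (-X₂) *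
          (fromBlocks (γ • X₁) A₁₂ (-(γ⁻¹ • A₂₁)) (-X₂))ᵀ := by
  rw [sub_eq_add_neg, fromBlocks_transpose, fromBlocks_multiply, fromBlocks_neg, fromBlocks_add,
    fromBlocks_inj]
  refine ⟨?_, ?_, ?_, ?_⟩ <;>
    simp [smul_mul_assoc, mul_smul_comm, smul_smul, hX₁.eq, hX₂.eq, hγ, sq] <;> abel

end CompletingSquare

end Matrix

theorem riccati_solutions_give_block_diag_lyapunov_general {k₁ k₂ : ℕ}
    (A₁₁ : Matrix (Fin k₁) (Fin k₁) ℝ) (A₁₂ : Matrix (Fin k₁) (Fin k₂) ℝ)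
    (A₂₁ : Matrix (Fin k₂) (Fin k₁) ℝ) (A₂₂ : Matrix (Fin k₂) (Fin k₂) ℝ)
    (X₁ : Matrix (Fin k₁) (Fin k₁) ℝ) (X₂ : Matrix (Fin k₂) (Fin k₂) ℝ)
    (γ : ℝ) (hγ : 0 < γ)
    (hX₁ : X₁.PosDef) (hX₂ : X₂.PosDef)
    (hRic₁ : A₁₁ * X₁ + X₁ * A₁₁ᵀ + (γ ^ 2) • (X₁ * X₁) + A₁₂ * A₁₂ᵀ = 0)
    (hRic₂ : (-(A₂₂ * X₂ + X₂ * A₂₂ᵀ + X₂ * X₂ + (γ ^ 2)⁻¹ • (A₂₁ * A₂₁ᵀ))).PosDef) :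
    (-(Matrix.fromBlocks
        (A₁₁ * X₁ + X₁ * A₁₁ᵀ) (A₁₂ * X₂ + X₁ * A₂₁ᵀ)
        (A₂₁ * X₁ + X₂ * A₁₂ᵀ) (A₂₂ * X₂ + X₂ * A₂₂ᵀ))).PosDef := by
  set U := fromBlocks (γ • X₁) A₁₂ (-(γ⁻¹ • A₂₁)) (-X₂)
  have hU : Uᵀ = Uᴴ := (conjTranspose_eq_transpose_of_trivial U).symm
  have hU₁₁ : (U * Uᴴ).toBlocks₁₁.PosDef := by
    rw [toBlocks₁₁_fromBlocks_mul_conjTranspose]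
    have hγX₁ : Function.Injective (γ • X₁).vecMul :=
      vecMul_injective_iff_isUnit.2 (hX₁.smul hγ).isUnit
    exact (PosDef.mul_conjTranspose_self _ hγX₁).add_posSemidef
      (posSemidef_self_mul_conjTranspose A₁₂)
  rw [fromBlocks_lyapunov_eq_sub_mul_transpose hγ.ne' A₁₁ A₁₂ A₂₁ A₂₂
      (isHermitian_iff_isSymm.1 hX₁.isHermitian) (isHermitian_iff_isSymm.1 hX₂.isHermitian),
    hRic₁, neg_sub, sub_eq_add_neg, fromBlocks_neg, hU]
  simp only [neg_zero]
  exact (posSemidef_self_mul_conjTranspose U).add_fromBlocks_zero_zero_zero_posDef hU₁₁ hRic₂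

theorem riccati_solutions_give_block_diag_lyapunov {k₁ k₂ : ℕ}
    (A₁₁ : Matrix (Fin k₁) (Fin k₁) ℝ) (A₁₂ : Matrix (Fin k₁) (Fin k₂) ℝ)
    (A₂₁ : Matrix (Fin k₂) (Fin k₁) ℝ) (A₂₂ : Matrix (Fin k₂) (Fin k₂) ℝ)
    (X₁ : Matrix (Fin k₁) (Fin k₁) ℝ) (X₂ : Matrix (Fin k₂) (Fin k₂) ℝ)
    (γ : ℝ) (hγ : 0 < γ) (h₁₁ : IsHurwitz A₁₁)
    (hX₁ : X₁.PosDef) (hX₂ : X₂.PosDef)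
    (hRic₁ : A₁₁ * X₁ + X₁ * A₁₁ᵀ + (γ ^ 2) • (X₁ * X₁) + A₁₂ * A₁₂ᵀ = 0)
    (hRic₂ : (-(A₂₂ * X₂ + X₂ * A₂₂ᵀ + X₂ * X₂ + (γ ^ 2)⁻¹ • (A₂₁ * A₂₁ᵀ))).PosDef) :
    (-(Matrix.fromBlocks
        (A₁₁ * X₁ + X₁ * A₁₁ᵀ) (A₁₂ * X₂ + X₁ * A₂₁ᵀ)
        (A₂₁ * X₁ + X₂ * A₁₂ᵀ) (A₂₂ * X₂ + X₂ * A₂₂ᵀ))).PosDef :=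
  riccati_solutions_give_block_diag_lyapunov_general A₁₁ A₁₂ A₂₁ A₂₂ X₁ X₂ γ hγ hX₁ hX₂ hRic₁ hRic₂
end

section
/- Let A be a Hurwitz block-partitioned real matrix with blocks A_{ij} ∈ ℝ^{k_i×k_j} such that each A_{ii} is Hurwitz and ‖(sI − A_{ii})^{−1}‖_{H∞} = ‖A_{ii}^{−1}‖₂. If the block comparison matrix M^α(A), defined by M^α(A)_{ii} = ‖A_{ii}^{−1}‖₂^{−1} and M^α(A)_{ij} = −‖A_{ij}‖₂ for i≠j, admits a strictly positive vector d with M^α(A) d ≫ 0, then A is Hurwitz. -/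
open Matrix

/-- The H∞ norm of a (stable) matrix-valued transfer function `K`,
`‖K‖_{H∞} = sup_{ω ∈ ℝ} ‖K(jω)‖₂`. -/
noncomputable def hinfNorm {m n : Type*} [Fintype m] [Fintype n] [DecidableEq n]
    (K : ℝ → Matrix m n ℂ) : ℝ :=
  ⨆ ω : ℝ, specNorm (K ω)

/-!
Suppose `μ` with `Re μ ≥ 0` is an eigenvalue of `A` with eigenvector `v = (v_i)`. The block rows
read `(μ - A_ii) v_i = ∑_{j ≠ i} A_ij v_j`. The resolvent of the Hurwitz block `A_ii` is holomorphic
on the closed right half-plane and vanishes at infinity, so by Phragmén–Lindelöf its norm there is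
bounded by its supremum on the imaginary axis, which is `‖A_ii⁻¹‖`. Hence
`‖v_i‖ ≤ ‖A_ii⁻¹‖ ∑_{j ≠ i} ‖A_ij‖ ‖v_j‖`, and at a block where `‖v_i‖ / d_i` is maximal this
contradicts the scaled dominance unless `v = 0`.
-/

namespace spectrum

open Complex Filter Bornology Topology Set ZeroAtInfty

variable {A : Type*} [NormedRing A] [NormedAlgebra ℂ A] [CompleteSpace A]

theorem differentiableOn_resolvent (a : A) :
    DifferentiableOn ℂ (resolvent a) (resolventSet ℂ a) :=
  fun _ hz => (hasDerivAt_resolvent_const_left hz).differentiableAt.differentiableWithinAt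

theorem bddAbove_norm_resolvent_mul_I {a : A}
    (h : ∀ ω : ℝ, (ω * I : ℂ) ∈ resolventSet ℂ a) :
    BddAbove (range fun ω : ℝ => ‖resolvent a (ω * I)‖) := by
  have hinf : Tendsto (fun ω : ℝ => (ω * I : ℂ)) (cocompact ℝ) (cobounded ℂ) := by
    rw [← Metric.cobounded_eq_cocompact, ← tendsto_norm_atTop_iff_cobounded]
    simpa [← Real.norm_eq_abs, Metric.cobounded_eq_cocompact] using
      tendsto_norm_cobounded_atTop (E := ℝ)
  let g : C₀(ℝ, A) :=
    { toFun := fun ω => resolvent a (ω * I)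
      continuous_toFun := (differentiableOn_resolvent a).continuousOn.comp_continuous
        (by fun_prop) h
      zero_at_infty' := (resolvent_tendsto_cobounded a).comp hinf }
  obtain ⟨C, hC⟩ := isBounded_iff_forall_norm_le.1 g.isBounded_range
  exact ⟨C, by rintro _ ⟨ω, rfl⟩; exact hC _ ⟨ω, rfl⟩⟩

theorem norm_resolvent_le_of_forall_mul_I {a : A} {C : ℝ}
    (hρ : ∀ z : ℂ, 0 ≤ z.re → z ∈ resolventSet ℂ a)
    (hC : ∀ ω : ℝ, ‖resolvent a (ω * I)‖ ≤ C) {z : ℂ} (hz : 0 ≤ z.re) :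
    ‖resolvent a z‖ ≤ C := by
  have htend := resolvent_tendsto_cobounded (𝕜 := ℂ) a
  refine PhragmenLindelof.right_half_plane_of_tendsto_zero_on_real ?_ ?_
    (htend.comp (RCLike.tendsto_ofReal_atTop_cobounded ℂ)) hC hz
  · refine ((differentiableOn_resolvent a).mono fun z hz => hρ z ?_).diffContOnCl
    rwa [closure_setOfPred_lt_re] at hz
  · refine ⟨0, two_pos, 0, ?_⟩
    simpa using (htend.isBigO_one ℝ).mono inf_le_left

end spectrum

theorem nonpos_of_le_mul_sum_of_dominant {ι : Type*} [Fintype ι] [DecidableEq ι]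
    {N d a : ι → ℝ} {b : ι → ι → ℝ} (hb : ∀ i j, 0 ≤ b i j) (hd : ∀ i, 0 < d i)
    (hdom : ∀ i, ∑ j ∈ Finset.univ.erase i, b i j * d j < (a i)⁻¹ * d i)
    (hN : ∀ i, N i ≤ a i * ∑ j ∈ Finset.univ.erase i, b i j * N j) (i : ι) : N i ≤ 0 := by
  obtain ⟨i₀, -, hmax⟩ :=
    Finset.exists_max_image Finset.univ (fun j => N j / d j) ⟨i, Finset.mem_univ i⟩
  set c := N i₀ / d i₀ with hc_def
  have hNc : ∀ j, N j ≤ c * d j := fun j => (div_le_iff₀ (hd j)).1 (hmax j (Finset.mem_univ j))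
  suffices hc : c ≤ 0 from (hNc i).trans (mul_nonpos_of_nonpos_of_nonneg hc (hd i).le)
  by_contra! hc
  have ha : 0 < a i₀ := by
    have := (Finset.sum_nonneg fun j _ => mul_nonneg (hb i₀ j) (hd j).le).trans_lt (hdom i₀)
    exact inv_pos.1 (pos_of_mul_pos_left this (hd i₀).le)
  have : N i₀ < N i₀ := calc
    N i₀ ≤ a i₀ * ∑ j ∈ Finset.univ.erase i₀, b i₀ j * N j := hN i₀
    _ ≤ a i₀ * ∑ j ∈ Finset.univ.erase i₀, b i₀ j * (c * d j) := by
      gcongr with j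
      · exact hb i₀ j
      · exact hNc j
    _ = c * a i₀ * ∑ j ∈ Finset.univ.erase i₀, b i₀ j * d j := by
      rw [Finset.mul_sum, Finset.mul_sum]
      exact Finset.sum_congr rfl fun j _ => by ring
    _ < c * a i₀ * ((a i₀)⁻¹ * d i₀) := by gcongr; exact hdom i₀
    _ = N i₀ := by rw [hc_def]; field_simp [(hd i₀).ne']
  exact lt_irrefl _ this

section Block

variable {ι R : Type*} [Fintype ι] [CommRing R] {κ : ι → Type*} [∀ i, Fintype (κ i)]

theorem Matrix.mulVec_sigma_apply (A : Matrix (Σ i, κ i) (Σ i, κ i) R) (v : (Σ i, κ i) → R)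
    (i : ι) (x : κ i) :
    (A *ᵥ v) ⟨i, x⟩
      = ∑ j, (A.submatrix (Sigma.mk i) (Sigma.mk j) *ᵥ fun y => v ⟨j, y⟩) x := by
  simp only [mulVec, dotProduct, ← Finset.univ_sigma_univ, Finset.sum_sigma]
  rfl

theorem Matrix.smul_one_sub_submatrix_mulVec_of_mulVec_eq_smul [DecidableEq ι]
    [∀ i, DecidableEq (κ i)] {A : Matrix (Σ i, κ i) (Σ i, κ i) R} {v : (Σ i, κ i) → R} {μ : R}
    (hv : A *ᵥ v = μ • v) (i : ι) :
    (μ • 1 - A.submatrix (Sigma.mk i) (Sigma.mk i)) *ᵥ (fun y => v ⟨i, y⟩)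
      = ∑ j ∈ Finset.univ.erase i,
          A.submatrix (Sigma.mk i) (Sigma.mk j) *ᵥ fun y => v ⟨j, y⟩ := by
  have hrow : μ • (fun y => v ⟨i, y⟩)
      = ∑ j, A.submatrix (Sigma.mk i) (Sigma.mk j) *ᵥ fun y => v ⟨j, y⟩ := by
    ext x
    simpa [Matrix.mulVec_sigma_apply] using (congrFun hv ⟨i, x⟩).symm
  rw [sub_mulVec, smul_mulVec, one_mulVec, hrow, ← Finset.add_sum_erase _ _ (Finset.mem_univ i),
    add_sub_cancel_left]

end Block

section L2

open scoped Matrix.Norms.L2Operator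

variable {m n : Type*} [Fintype m] [Fintype n] [DecidableEq n]

theorem specNorm_eq_norm (B : Matrix m n ℂ) : specNorm B = ‖B‖ := rfl

theorem Matrix.norm_toLp_sum_mulVec_le {ι : Type*} {κ : ι → Type*} [∀ j, Fintype (κ j)]
    [∀ j, DecidableEq (κ j)] (s : Finset ι) (B : ∀ j, Matrix m (κ j) ℂ) (x : ∀ j, κ j → ℂ) :
    ‖WithLp.toLp 2 (∑ j ∈ s, B j *ᵥ x j)‖ ≤ ∑ j ∈ s, ‖B j‖ * ‖WithLp.toLp 2 (x j)‖ := by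
  rw [WithLp.toLp_sum]
  exact (norm_sum_le _ _).trans
    (Finset.sum_le_sum fun j _ => (B j).l2_opNorm_mulVec (WithLp.toLp 2 (x j)))

theorem Matrix.norm_toLp_le_of_mulVec_eq {B : Matrix n n ℂ} (hB : IsUnit B.det) {x y : n → ℂ}
    (h : B *ᵥ x = y) : ‖WithLp.toLp 2 x‖ ≤ ‖B⁻¹‖ * ‖WithLp.toLp 2 y‖ := by
  have hx : x = B⁻¹ *ᵥ y := by rw [← h, mulVec_mulVec, nonsing_inv_mul _ hB, one_mulVec]
  rw [hx]
  exact B⁻¹.l2_opNorm_mulVec (WithLp.toLp 2 y)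

theorem Matrix.exists_mulVec_eq_smul_of_mem_spectrum {M : Matrix n n ℂ} {μ : ℂ}
    (h : μ ∈ spectrum ℂ M) : ∃ v ≠ 0, M *ᵥ v = μ • v := by
  rw [← Matrix.spectrum_toLin', ← Module.End.hasEigenvalue_iff_mem_spectrum] at h
  obtain ⟨v, hv⟩ := h.exists_hasEigenvector
  exact ⟨v, hv.2, by simpa using hv.apply_eq_smul⟩

theorem Matrix.resolvent_eq (M : Matrix n n ℂ) (z : ℂ) : resolvent M z = (z • 1 - M)⁻¹ := by
  rw [resolvent, nonsing_inv_eq_ringInverse, Algebra.algebraMap_eq_smul_one]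

theorem specNorm_inv_smul_one_sub_le {M : Matrix n n ℂ} (hM : ∀ μ ∈ spectrum ℂ M, μ.re < 0)
    (hpeak : hinfNorm (fun ω => (((ω : ℂ) * Complex.I) • (1 : Matrix n n ℂ) - M)⁻¹)
      = specNorm M⁻¹)
    {z : ℂ} (hz : 0 ≤ z.re) : specNorm ((z • 1 - M)⁻¹) ≤ specNorm M⁻¹ := by
  have hρ : ∀ z : ℂ, 0 ≤ z.re → z ∈ resolventSet ℂ M := fun z hz => by
    by_contra h
    exact (hM z h).not_ge hz
  simp only [specNorm_eq_norm, hinfNorm, ← Matrix.resolvent_eq] at hpeak ⊢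
  refine spectrum.norm_resolvent_le_of_forall_mul_I hρ (fun ω => ?_) hz
  rw [← hpeak]
  exact le_ciSup (spectrum.bddAbove_norm_resolvent_mul_I fun ω => hρ _ (by simp)) ω

end L2

theorem block_comparison_H_matrix_implies_hurwitz_general {nb : ℕ} (k : Fin nb → ℕ)
    (A : Matrix ((i : Fin nb) × Fin (k i)) ((i : Fin nb) × Fin (k i)) ℝ)
    -- the diagonal blocks `A_{ii}`
    (Ablk : ∀ i j : Fin nb, Matrix (Fin (k i)) (Fin (k j)) ℝ)
    (hblk : ∀ (i j : Fin nb) (x : Fin (k i)) (y : Fin (k j)),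
      Ablk i j x y = A ⟨i, x⟩ ⟨j, y⟩)
    -- each diagonal block is Hurwitz and nonsingular
    (hAiiHurwitz : ∀ i, IsHurwitz (Ablk i i))
    -- the resolvent norm over the imaginary axis peaks at `s = 0`:
    -- `‖(sI − A_{ii})⁻¹‖_{H∞} = ‖A_{ii}⁻¹‖₂`
    (hpeak : ∀ i, hinfNorm (fun ω =>
        (((ω : ℂ) * Complex.I) • (1 : Matrix (Fin (k i)) (Fin (k i)) ℂ)
          - (Ablk i i).map (algebraMap ℝ ℂ))⁻¹)
      = specNorm (((Ablk i i).map (algebraMap ℝ ℂ))⁻¹))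
    -- scaled block diagonal dominance of the block comparison matrix:
    -- `∃ d ≫ 0` with `‖A_{ii}⁻¹‖₂⁻¹ d_i > Σ_{j≠i} ‖A_{ij}‖₂ d_j`
    (d : Fin nb → ℝ) (hd : ∀ i, 0 < d i)
    (hdd : ∀ i, ∑ j ∈ Finset.univ.erase i,
        specNorm ((Ablk i j).map (algebraMap ℝ ℂ)) * d j
      < (specNorm (((Ablk i i).map (algebraMap ℝ ℂ))⁻¹))⁻¹ * d i) :
    IsHurwitz A := by
  intro μ hμ
  by_contra! hμre
  set Ac := A.map (algebraMap ℝ ℂ)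
  have hsub : ∀ i j, (Ablk i j).map (algebraMap ℝ ℂ) = Ac.submatrix (Sigma.mk i) (Sigma.mk j) :=
    fun i j => by ext x y; simp [Ac, hblk]
  obtain ⟨v, hv0, hv⟩ := Matrix.exists_mulVec_eq_smul_of_mem_spectrum hμ
  have hblock : ∀ i, ‖WithLp.toLp 2 (fun y => v ⟨i, y⟩)‖
      ≤ specNorm ((Ablk i i).map (algebraMap ℝ ℂ))⁻¹ * ∑ j ∈ Finset.univ.erase i,
        specNorm ((Ablk i j).map (algebraMap ℝ ℂ)) * ‖WithLp.toLp 2 (fun y => v ⟨j, y⟩)‖ := by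
    intro i
    have hunit : IsUnit (μ • 1 - (Ablk i i).map (algebraMap ℝ ℂ)).det := by
      have := spectrum.notMem_iff.1 fun h => (hAiiHurwitz i μ h).not_ge hμre
      rwa [Algebra.algebraMap_eq_smul_one, isUnit_iff_isUnit_det] at this
    have hrow : (μ • 1 - (Ablk i i).map (algebraMap ℝ ℂ)) *ᵥ (fun y => v ⟨i, y⟩)
        = ∑ j ∈ Finset.univ.erase i, (Ablk i j).map (algebraMap ℝ ℂ) *ᵥ (fun y => v ⟨j, y⟩) := by
      simpa only [hsub] using Matrix.smul_one_sub_submatrix_mulVec_of_mulVec_eq_smul hv i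
    exact (Matrix.norm_toLp_le_of_mulVec_eq hunit hrow).trans <|
      mul_le_mul (specNorm_inv_smul_one_sub_le (hAiiHurwitz i) (hpeak i) hμre)
        (Matrix.norm_toLp_sum_mulVec_le _ _ _) (norm_nonneg _) (norm_nonneg _)
  have hzero := nonpos_of_le_mul_sum_of_dominant (fun i j => norm_nonneg _) hd hdd hblock
  exact hv0 <| funext fun p =>
    congrFun ((WithLp.toLp_eq_zero 2).1 (norm_le_zero_iff.1 (hzero p.1))) p.2

theorem block_comparison_H_matrix_implies_hurwitz {nb : ℕ} (k : Fin nb → ℕ)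
    (A : Matrix ((i : Fin nb) × Fin (k i)) ((i : Fin nb) × Fin (k i)) ℝ)
    -- the diagonal blocks `A_{ii}`
    (Ablk : ∀ i j : Fin nb, Matrix (Fin (k i)) (Fin (k j)) ℝ)
    (hblk : ∀ (i j : Fin nb) (x : Fin (k i)) (y : Fin (k j)),
      Ablk i j x y = A ⟨i, x⟩ ⟨j, y⟩)
    -- each diagonal block is Hurwitz and nonsingular
    (hAiiHurwitz : ∀ i, IsHurwitz (Ablk i i))
    (hAiiNonsing : ∀ i, (Ablk i i).det ≠ 0)
    -- the resolvent norm over the imaginary axis peaks at `s = 0`: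
    -- `‖(sI − A_{ii})⁻¹‖_{H∞} = ‖A_{ii}⁻¹‖₂`
    (hpeak : ∀ i, hinfNorm (fun ω =>
        (((ω : ℂ) * Complex.I) • (1 : Matrix (Fin (k i)) (Fin (k i)) ℂ)
          - (Ablk i i).map (algebraMap ℝ ℂ))⁻¹)
      = specNorm (((Ablk i i).map (algebraMap ℝ ℂ))⁻¹))
    -- scaled block diagonal dominance of the block comparison matrix:
    -- `∃ d ≫ 0` with `‖A_{ii}⁻¹‖₂⁻¹ d_i > Σ_{j≠i} ‖A_{ij}‖₂ d_j`
    (d : Fin nb → ℝ) (hd : ∀ i, 0 < d i)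
    (hdd : ∀ i, ∑ j ∈ Finset.univ.erase i,
        specNorm ((Ablk i j).map (algebraMap ℝ ℂ)) * d j
      < (specNorm (((Ablk i i).map (algebraMap ℝ ℂ))⁻¹))⁻¹ * d i) :
    IsHurwitz A :=
  block_comparison_H_matrix_implies_hurwitz_general k A Ablk hblk hAiiHurwitz hpeak d hd hdd
end
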